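/- arXiv:2010.11737 — 5 statements merged into one kernel-verified Lean document; each statement's English description precedes it below -/
import Mathlib

section
/- Let sequences be given as follows: v_0 = x_0 ∈ X, y_0 ∈ Y, and for every k ≥ 1 set γ_k = 3/(k+2), α_k = 6κL/(k+1), ζ_k = L·D_X²/(384·k(k+1)), ε_k = κL·D_X²/(k(k+1)(k+2)), z_k = (1−γ_k)x_{k−1} + γ_k v_{k−1}, and suppose there exist y_k ∈ Y and v_k ∈ X such that (i) f(x_k, y_k) ≥ max_{y∈Y} f(x_k, y) − ε_k where x_k = (1−γ_k)x_{k−1} + γ_k v_k, and (ii) ⟨∇_x f(z_k, y_k) + α_k(v_k − v_{k−1}), v_k − x⟩ ≤ ζ_k for all x ∈ X. Define ȳ_k = (3/(k(k+1)(k+2))) Σ_{s=1}^k s(s+1) y_s. Then for every k ≥ 1: max_{y∈Y} f(x_k, y) − min_{x∈X} f(x, ȳ_k) ≤ 11κL·D_X² / ((k+1)(k+2)). -/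
/-!
A Lyapunov argument. With `Γₖ = k(k+1)(k+2)` and a fixed comparison point `x ∈ X`, the quantity
`uₖ = Γₖ (f(xₖ, yₖ) + εₖ) + 9κLk ‖x - vₖ‖²` increases in one iteration by at most
`3k(k+1) ℓₖ(x) + 11κL D_X²`, where `ℓₖ` is the linearization of `f(·, yₖ)` at `zₖ`: the descent
lemma, convexity at `xₖ₋₁` and the Wolfe condition give the classical conditional-gradient-sliding
step, and since `κ ≥ 1` the prox weight `αₖ` absorbs the `‖vₖ - vₖ₋₁‖²` term. Telescoping,
`ℓₛ(x) ≤ f(x, yₛ)` by convexity, and concavity applied to the average `ȳₖ` of the `yₛ` with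
weights `s(s+1)` give `Γₖ (f(xₖ, y) - f(x, ȳₖ)) ≤ 11kκL D_X²`.
-/

open scoped RealInnerProductSpace
open Finset InnerProductSpace

variable {E : Type*} [NormedAddCommGroup E] [InnerProductSpace ℝ E]

theorem le_add_inner_add_mul_norm_sq_of_lipschitz_gradient [CompleteSpace E]
    {φ : E → ℝ} {g : E → E} {s : Set E} {L : ℝ} (hs : Convex ℝ s) (hL : 0 ≤ L)
    (hφ : ∀ w ∈ s, HasGradientAt φ (g w) w)
    (hg : ∀ w ∈ s, ∀ w' ∈ s, ‖g w - g w'‖ ≤ L * ‖w - w'‖) {a b : E} (ha : a ∈ s) (hb : b ∈ s) :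
    φ b ≤ φ a + ⟪g a, b - a⟫ + L * ‖b - a‖ ^ 2 := by
  have hψ : ∀ w ∈ segment ℝ a b, HasFDerivWithinAt (fun w => φ w - ⟪g a, w⟫)
      (toDual ℝ E (g w - g a)) (segment ℝ a b) w := fun w hw => by
    rw [map_sub]
    exact ((hφ w (hs.segment_subset ha hb hw)).hasFDerivAt.sub
      (toDual ℝ E (g a)).hasFDerivAt).hasFDerivWithinAt
  have hbound : ∀ w ∈ segment ℝ a b, ‖toDual ℝ E (g w - g a)‖ ≤ L * ‖b - a‖ := fun w hw => by
    rw [LinearIsometryEquiv.norm_map]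
    exact (hg w (hs.segment_subset ha hb hw) a ha).trans
      (mul_le_mul_of_nonneg_left (norm_sub_le_of_mem_segment hw) hL)
  have h := (le_abs_self _).trans ((convex_segment a b).norm_image_sub_le_of_norm_hasFDerivWithin_le
    hψ hbound (left_mem_segment ℝ a b) (right_mem_segment ℝ a b))
  rw [inner_sub_right]
  linarith

theorem cgs_step_le {φ : E → ℝ} {G x₀ v₀ v₁ z x₁ u : E} {γ α ζ L : ℝ}
    (hγ₀ : 0 ≤ γ) (hγ₁ : γ ≤ 1)
    (hz : z = (1 - γ) • x₀ + γ • v₀) (hx₁ : x₁ = (1 - γ) • x₀ + γ • v₁)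
    (hdesc : φ x₁ ≤ φ z + ⟪G, x₁ - z⟫ + L * ‖x₁ - z‖ ^ 2)
    (hconv : ⟪G, x₀ - z⟫ ≤ φ x₀ - φ z)
    (hwolfe : ⟪G + α • (v₁ - v₀), v₁ - u⟫ ≤ ζ) :
    φ x₁ ≤ (1 - γ) * φ x₀ + γ * (φ z + ⟪G, u - z⟫ + ζ)
      + γ * α / 2 * (‖u - v₀‖ ^ 2 - ‖u - v₁‖ ^ 2)
      + (L * γ ^ 2 - γ * α / 2) * ‖v₁ - v₀‖ ^ 2 := by
  have hstep : x₁ - z = γ • (v₁ - v₀) := by rw [hx₁, hz]; module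
  have hsplit : ⟪G, x₁ - z⟫ = (1 - γ) * ⟪G, x₀ - z⟫ + γ * ⟪G, v₁ - u⟫ + γ * ⟪G, u - z⟫ := by
    have : x₁ - z = (1 - γ) • (x₀ - z) + γ • (v₁ - u) + γ • (u - z) := by
      rw [hx₁, hz]; module
    rw [this, inner_add_right, inner_add_right, real_inner_smul_right, real_inner_smul_right,
      real_inner_smul_right]
  have hnorm : ‖x₁ - z‖ ^ 2 = γ ^ 2 * ‖v₁ - v₀‖ ^ 2 := by
    rw [hstep, norm_smul, Real.norm_eq_abs, abs_of_nonneg hγ₀, mul_pow]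
  have hpolar : 2 * ⟪v₁ - v₀, v₁ - u⟫ = ‖v₁ - v₀‖ ^ 2 + ‖u - v₁‖ ^ 2 - ‖u - v₀‖ ^ 2 := by
    have := norm_sub_sq_real (v₁ - v₀) (v₁ - u)
    rw [show v₁ - v₀ - (v₁ - u) = u - v₀ by abel, norm_sub_rev v₁ u] at this
    linarith
  rw [inner_add_left, real_inner_smul_left] at hwolfe
  rw [hsplit, hnorm] at hdesc
  linear_combination hdesc + (1 - γ) * hconv + γ * hwolfe + γ * α / 2 * hpolar.symm

theorem cgs_weighted_step_le {φ : E → ℝ} {G x₀ v₀ v₁ z x₁ u : E} {j κ L γ α ζ : ℝ}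
    (hj : 0 ≤ j) (hκ : 1 ≤ κ) (hL : 0 ≤ L) (hγ : γ = 3 / (j + 3)) (hα : α = 6 * κ * L / (j + 2))
    (hz : z = (1 - γ) • x₀ + γ • v₀) (hx₁ : x₁ = (1 - γ) • x₀ + γ • v₁)
    (hdesc : φ x₁ ≤ φ z + ⟪G, x₁ - z⟫ + L * ‖x₁ - z‖ ^ 2)
    (hconv : ⟪G, x₀ - z⟫ ≤ φ x₀ - φ z)
    (hwolfe : ⟪G + α • (v₁ - v₀), v₁ - u⟫ ≤ ζ) :
    (j + 1) * (j + 2) * (j + 3) * φ x₁ ≤ j * (j + 1) * (j + 2) * φ x₀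
      + 3 * (j + 1) * (j + 2) * (φ z + ⟪G, u - z⟫ + ζ)
      + 9 * κ * L * (j + 1) * (‖u - v₀‖ ^ 2 - ‖u - v₁‖ ^ 2) := by
  have hγ₀ : 0 ≤ γ := by rw [hγ]; positivity
  have hγ₁ : γ ≤ 1 := by rw [hγ, div_le_one (by positivity)]; linarith
  have h := cgs_step_le hγ₀ hγ₁ hz hx₁ hdesc hconv hwolfe
  set θ := (j + 1) * (j + 2) * (j + 3)
  have e₁ : θ * (1 - γ) = j * (j + 1) * (j + 2) := by rw [hγ]; field_simp; ring
  have e₂ : θ * γ = 3 * (j + 1) * (j + 2) := by rw [hγ]; field_simp; ring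
  have e₃ : θ * (γ * α / 2) = 9 * κ * L * (j + 1) := by rw [hγ, hα]; field_simp; ring
  have e₄ : θ * (L * γ ^ 2 - γ * α / 2) ≤ 0 := by
    have : θ * (L * γ ^ 2 - γ * α / 2) = 9 * L * (j + 1) * ((j + 2) / (j + 3) - κ) := by
      rw [hγ, hα]; field_simp; ring
    rw [this]
    have : (j + 2) / (j + 3) ≤ 1 := by rw [div_le_one (by positivity)]; linarith
    exact mul_nonpos_of_nonneg_of_nonpos (by positivity) (by linarith)
  calc θ * φ x₁
      ≤ θ * ((1 - γ) * φ x₀ + γ * (φ z + ⟪G, u - z⟫ + ζ)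
          + γ * α / 2 * (‖u - v₀‖ ^ 2 - ‖u - v₁‖ ^ 2)
          + (L * γ ^ 2 - γ * α / 2) * ‖v₁ - v₀‖ ^ 2) :=
        mul_le_mul_of_nonneg_left h (by positivity)
    _ = θ * (1 - γ) * φ x₀ + θ * γ * (φ z + ⟪G, u - z⟫ + ζ)
          + θ * (γ * α / 2) * (‖u - v₀‖ ^ 2 - ‖u - v₁‖ ^ 2)
          + θ * (L * γ ^ 2 - γ * α / 2) * ‖v₁ - v₀‖ ^ 2 := by ring
    _ ≤ _ := by
      rw [e₁, e₂, e₃]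
      linarith [mul_nonpos_of_nonpos_of_nonneg e₄ (sq_nonneg ‖v₁ - v₀‖)]

theorem Finset.sum_mul_le_sum_mul_centerMass_of_le_inner {F ι : Type*} [NormedAddCommGroup F]
    [InnerProductSpace ℝ F] {Y : Set F} {h : F → ℝ} {g : F → F} (hY : Convex ℝ Y)
    (hsup : ∀ y₁ ∈ Y, ∀ y₂ ∈ Y, h y₁ - h y₂ ≤ ⟪g y₂, y₁ - y₂⟫)
    {t : Finset ι} {c : ι → ℝ} {p : ι → F} (hc : ∀ i ∈ t, 0 ≤ c i) (hc₀ : 0 < ∑ i ∈ t, c i)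
    (hp : ∀ i ∈ t, p i ∈ Y) :
    ∑ i ∈ t, c i * h (p i) ≤ (∑ i ∈ t, c i) * h (t.centerMass c p) := by
  set q := t.centerMass c p
  have hq : (∑ i ∈ t, c i) • q = ∑ i ∈ t, c i • p i := by
    simp only [q, centerMass, smul_smul, mul_inv_cancel₀ hc₀.ne', one_smul]
  have hqY : q ∈ Y := hY.centerMass_mem hc hc₀ hp
  calc ∑ i ∈ t, c i * h (p i) ≤ ∑ i ∈ t, c i * (h q + ⟪g q, p i - q⟫) :=
        sum_le_sum fun i hi => mul_le_mul_of_nonneg_left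
          (by linarith [hsup _ (hp i hi) _ hqY]) (hc i hi)
    _ = (∑ i ∈ t, c i) * h q + ⟪g q, ∑ i ∈ t, c i • p i - (∑ i ∈ t, c i) • q⟫ := by
        simp only [mul_add, sum_add_distrib, inner_sub_right, inner_sum, real_inner_smul_right,
          mul_sub, sum_sub_distrib, sum_mul]
    _ = (∑ i ∈ t, c i) * h q := by rw [hq, sub_self, inner_zero_right, add_zero]

theorem Convex.iterate_mem {s : Set E} (hs : Convex ℝ s) {x v : ℕ → E} {γ : ℕ → ℝ}
    (hγ : ∀ k, 1 ≤ k → 0 ≤ γ k ∧ γ k ≤ 1) (hx₀ : x 0 ∈ s) (hv : ∀ k, 1 ≤ k → v k ∈ s)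
    (hx : ∀ k, 1 ≤ k → x k = (1 - γ k) • x (k - 1) + γ k • v k) (k : ℕ) : x k ∈ s := by
  induction k with
  | zero => exact hx₀
  | succ k ih =>
    have hk : 1 ≤ k + 1 := by omega
    rw [hx _ hk, Nat.add_sub_cancel]
    exact hs ih (hv _ hk) (by linarith [(hγ _ hk).2]) (hγ _ hk).1 (by ring)

theorem mpcgs_iterates_mem {X : Set E} (hX : Convex ℝ X) {γ : ℕ → ℝ} {x v z : ℕ → E}
    (hγ : ∀ k, γ k = 3 / ((k : ℝ) + 2)) (hx₀ : x 0 ∈ X) (hv₀ : v 0 = x 0)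
    (hv : ∀ k, 1 ≤ k → v k ∈ X)
    (hz : ∀ k, 1 ≤ k → z k = (1 - γ k) • x (k - 1) + γ k • v (k - 1))
    (hx : ∀ k, 1 ≤ k → x k = (1 - γ k) • x (k - 1) + γ k • v k) :
    (∀ k, v k ∈ X) ∧ (∀ k, x k ∈ X) ∧ ∀ k, 1 ≤ k → z k ∈ X := by
  have hγ₀₁ : ∀ k, 1 ≤ k → 0 ≤ γ k ∧ γ k ≤ 1 := fun k hk => by
    have : (1 : ℝ) ≤ k := by exact_mod_cast hk
    rw [hγ, div_le_one (by positivity)]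
    exact ⟨by positivity, by linarith⟩
  have hvX : ∀ k, v k ∈ X := fun k => by
    rcases k.eq_zero_or_pos with rfl | hk
    · rwa [hv₀]
    · exact hv k hk
  have hxX := hX.iterate_mem hγ₀₁ hx₀ hv hx
  refine ⟨hvX, hxX, fun k hk => hz k hk ▸ ?_⟩
  exact hX (hxX _) (hvX _) (by linarith [hγ₀₁ k hk]) (hγ₀₁ k hk).1 (by ring)

theorem sum_Icc_mul_succ (N : ℕ) :
    ∑ s ∈ Icc 1 N, (s : ℝ) * (s + 1) = N * (N + 1) * (N + 2) / 3 := by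
  induction N with
  | zero => simp
  | succ N ih =>
    rw [sum_Icc_succ_top (by omega), ih]
    push_cast
    ring

theorem le_add_sum_Icc_of_le_add {u b : ℕ → ℝ} {c : ℝ} (h : ∀ k, u (k + 1) ≤ u k + b (k + 1) + c)
    (K : ℕ) : u K ≤ u 0 + ∑ s ∈ Icc 1 K, b s + K * c := by
  induction K with
  | zero => simp
  | succ K ih =>
    rw [sum_Icc_succ_top (by omega)]
    push_cast
    linarith [h K]

theorem mpcgs_potential_le {F : Type*} {f : E → F → ℝ} {gx : E → F → E} {X : Set E} {Y : Set F}
    {L κ D : ℝ} {γ α ζ ε : ℕ → ℝ} {x v z : ℕ → E} {y : ℕ → F} {x' : E}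
    (hL : 0 ≤ L) (hκ : 1 ≤ κ)
    (hdesc : ∀ w ∈ Y, ∀ a ∈ X, ∀ b ∈ X, f b w ≤ f a w + ⟪gx a w, b - a⟫ + L * ‖b - a‖ ^ 2)
    (hconv : ∀ w ∈ Y, ∀ a ∈ X, ∀ b ∈ X, f a w - f b w ≥ ⟪gx b w, a - b⟫)
    (hγ : ∀ k, γ k = 3 / ((k : ℝ) + 2)) (hα : ∀ k, α k = 6 * κ * L / ((k : ℝ) + 1))
    (hζ : ∀ k, ζ k = L * D ^ 2 / (384 * (k : ℝ) * ((k : ℝ) + 1)))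
    (hε : ∀ k, ε k = κ * L * D ^ 2 / ((k : ℝ) * ((k : ℝ) + 1) * ((k : ℝ) + 2)))
    (hxX : ∀ k, x k ∈ X) (hzX : ∀ k, 1 ≤ k → z k ∈ X) (hyY : ∀ k, 1 ≤ k → y k ∈ Y)
    (hvD : ∀ k, ‖x' - v k‖ ≤ D)
    (hz : ∀ k, 1 ≤ k → z k = (1 - γ k) • x (k - 1) + γ k • v (k - 1))
    (hx : ∀ k, 1 ≤ k → x k = (1 - γ k) • x (k - 1) + γ k • v k)
    (hmax : ∀ k, 1 ≤ k → ∀ w ∈ Y, f (x k) (y k) ≥ f (x k) w - ε k)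
    (hwolfe : ∀ k, 1 ≤ k → ⟪gx (z k) (y k) + α k • (v k - v (k - 1)), v k - x'⟫ ≤ ζ k)
    (K : ℕ) :
    K * (K + 1) * (K + 2) * (f (x K) (y K) + ε K) ≤
      3 * ∑ s ∈ Icc 1 K, s * (s + 1) * (f (z s) (y s) + ⟪gx (z s) (y s), x' - z s⟫)
      + 11 * K * (κ * L * D ^ 2) := by
  set C := κ * L * D ^ 2
  have hD : 0 ≤ D := (norm_nonneg _).trans (hvD 0)
  have hLC : L * D ^ 2 ≤ C := by
    simpa only [C, mul_assoc] using le_mul_of_one_le_left (by positivity) hκ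
  let ℓ : ℕ → ℝ := fun s => f (z s) (y s) + ⟪gx (z s) (y s), x' - z s⟫
  let u : ℕ → ℝ := fun k =>
    k * (k + 1) * (k + 2) * (f (x k) (y k) + ε k) + 9 * κ * L * k * ‖x' - v k‖ ^ 2
  have hstep : ∀ j : ℕ,
      u (j + 1) ≤ u j + 3 * ((j + 1 : ℕ) * ((j + 1 : ℕ) + 1) * ℓ (j + 1)) + 11 * C := by
    intro j
    have hj : 1 ≤ j + 1 := by omega
    have hB := cgs_weighted_step_le (φ := fun p => f p (y (j + 1))) (j := j)
      (γ := γ (j + 1)) (α := α (j + 1)) (u := x') (Nat.cast_nonneg j) hκ hL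
      (by rw [hγ]; push_cast; ring) (by rw [hα]; push_cast; ring)
      (by simpa using hz _ hj) (by simpa using hx _ hj)
      (hdesc _ (hyY _ hj) _ (hzX _ hj) _ (hxX _))
      (by linarith [hconv _ (hyY _ hj) _ (hxX j) _ (hzX _ hj)]) (by simpa using hwolfe _ hj)
    have hprev : j * (j + 1) * (j + 2) * f (x j) (y (j + 1)) ≤
        j * (j + 1) * (j + 2) * (f (x j) (y j) + ε j) := by
      rcases j.eq_zero_or_pos with rfl | hj₀
      · simp
      · exact mul_le_mul_of_nonneg_left (by linarith [hmax j hj₀ _ (hyY _ hj)]) (by positivity)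
    have hε' : ((j : ℝ) + 1) * (j + 2) * (j + 3) * ε (j + 1) = C := by
      rw [hε]; push_cast; field_simp; ring
    have hζ' : 3 * ((j : ℝ) + 1) * (j + 2) * ζ (j + 1) ≤ C := by
      rw [hζ]; push_cast
      calc _ = L * D ^ 2 / 128 := by field_simp; ring
        _ ≤ C := by linarith [hLC, mul_nonneg hL (sq_nonneg D)]
    have hv : ‖x' - v j‖ ^ 2 ≤ D ^ 2 := pow_le_pow_left₀ (norm_nonneg _) (hvD j) 2
    simp only [u, ℓ]
    push_cast
    linarith [mul_le_mul_of_nonneg_left hv (by positivity : (0 : ℝ) ≤ 9 * κ * L)]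
  have := le_add_sum_Icc_of_le_add (b := fun s => 3 * (s * (s + 1) * ℓ s)) hstep K
  simp only [u, ← mul_sum] at this
  push_cast at this
  linarith [mul_nonneg (by positivity : (0 : ℝ) ≤ 9 * κ * L * K) (sq_nonneg ‖x' - v K‖)]

theorem mpcgs_convergence_general
    {n m : ℕ}
    (X : Set (EuclideanSpace ℝ (Fin n))) (Y : Set (EuclideanSpace ℝ (Fin m)))
    (hXconv : Convex ℝ X)
    (hYconv : Convex ℝ Y)
    (DX : ℝ)
    (hDX : ∀ x₁ ∈ X, ∀ x₂ ∈ X, ‖x₁ - x₂‖ ≤ DX)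
    (f : EuclideanSpace ℝ (Fin n) → EuclideanSpace ℝ (Fin m) → ℝ)
    (gx : EuclideanSpace ℝ (Fin n) → EuclideanSpace ℝ (Fin m) → EuclideanSpace ℝ (Fin n))
    (gy : EuclideanSpace ℝ (Fin n) → EuclideanSpace ℝ (Fin m) → EuclideanSpace ℝ (Fin m))
    (hgx : ∀ x y, HasGradientAt (fun x' => f x' y) (gx x y) x)
    (L μ κ : ℝ) (hμ : 0 < μ) (hμL : μ ≤ L) (hκ : κ = L / μ)
    (hsmooth : ∀ x₁ ∈ X, ∀ x₂ ∈ X, ∀ y₁ ∈ Y, ∀ y₂ ∈ Y,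
      ‖gx x₁ y₁ - gx x₂ y₂‖ ^ 2 + ‖gy x₁ y₁ - gy x₂ y₂‖ ^ 2 ≤
        L ^ 2 * (‖x₁ - x₂‖ ^ 2 + ‖y₁ - y₂‖ ^ 2))
    (hconv : ∀ y ∈ Y, ∀ x₁ ∈ X, ∀ x₂ ∈ X,
      f x₁ y - f x₂ y ≥ ⟪gx x₂ y, x₁ - x₂⟫)
    (hconc : ∀ x ∈ X, ∀ y₁ ∈ Y, ∀ y₂ ∈ Y,
      f x y₁ - f x y₂ ≤ ⟪gy x y₂, y₁ - y₂⟫ - μ / 2 * ‖y₁ - y₂‖ ^ 2)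
    -- parameter sequences
    (γ α ζ ε : ℕ → ℝ)
    (hγ : ∀ k, γ k = 3 / ((k : ℝ) + 2))
    (hα : ∀ k, α k = 6 * κ * L / ((k : ℝ) + 1))
    (hζ : ∀ k, ζ k = L * DX ^ 2 / (384 * (k : ℝ) * ((k : ℝ) + 1)))
    (hε : ∀ k, ε k = κ * L * DX ^ 2 / ((k : ℝ) * ((k : ℝ) + 1) * ((k : ℝ) + 2)))
    -- iterate sequences
    (x v z : ℕ → EuclideanSpace ℝ (Fin n)) (y : ℕ → EuclideanSpace ℝ (Fin m))
    (hx0 : x 0 ∈ X) (hv0 : v 0 = x 0)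
    (hvX : ∀ k, 1 ≤ k → v k ∈ X) (hyY : ∀ k, 1 ≤ k → y k ∈ Y)
    (hz : ∀ k, 1 ≤ k → z k = (1 - γ k) • x (k - 1) + γ k • v (k - 1))
    (hxk : ∀ k, 1 ≤ k → x k = (1 - γ k) • x (k - 1) + γ k • v k)
    -- (i): y_k is an ε_k-approximate maximizer of f(x_k, ·)
    (hmax : ∀ k, 1 ≤ k → ∀ y' ∈ Y, f (x k) (y k) ≥ f (x k) y' - ε k)
    -- (ii): Wolfe-gap condition from the CndG procedure
    (hwolfe : ∀ k, 1 ≤ k → ∀ x' ∈ X,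
      ⟪gx (z k) (y k) + α k • (v k - v (k - 1)), v k - x'⟫ ≤ ζ k)
    -- the averaged dual iterate
    (ybar : ℕ → EuclideanSpace ℝ (Fin m))
    (hybar : ∀ k, ybar k = (3 / ((k : ℝ) * ((k : ℝ) + 1) * ((k : ℝ) + 2))) •
      ∑ s ∈ Finset.Icc 1 k, ((s : ℝ) * ((s : ℝ) + 1)) • y s) :
    ∀ k, 1 ≤ k → ∀ y' ∈ Y, ∀ x' ∈ X,
      f (x k) y' - f x' (ybar k) ≤
        11 * κ * L * DX ^ 2 / (((k : ℝ) + 1) * ((k : ℝ) + 2)) := by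
  intro K hK y' hy' x' hx'
  have hL : 0 ≤ L := hμ.le.trans hμL
  have hκ₁ : 1 ≤ κ := by rw [hκ, le_div_iff₀ hμ]; linarith
  obtain ⟨hvX', hxX, hzX⟩ := mpcgs_iterates_mem hXconv hγ hx0 hv0 hvX hz hxk
  have hlip : ∀ w ∈ Y, ∀ a ∈ X, ∀ b ∈ X, ‖gx a w - gx b w‖ ≤ L * ‖a - b‖ :=
    fun w hw a ha b hb => by
      have := hsmooth a ha b hb w hw w hw
      rw [sub_self, norm_zero] at this
      exact (pow_le_pow_iff_left₀ (norm_nonneg _) (by positivity) two_ne_zero).1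
        (by nlinarith [sq_nonneg ‖gy a w - gy b w‖])
  have hpot := mpcgs_potential_le hL hκ₁
    (fun w hw a ha b hb => le_add_inner_add_mul_norm_sq_of_lipschitz_gradient hXconv hL
      (fun p _ => hgx p w) (hlip w hw) ha hb)
    hconv hγ hα hζ hε hxX hzX hyY (fun k => hDX x' hx' (v k) (hvX' k)) hz hxk hmax
    (fun k hk => hwolfe k hk x' hx') K
  have hlin : ∑ s ∈ Icc 1 K, (s : ℝ) * (s + 1) * (f (z s) (y s) + ⟪gx (z s) (y s), x' - z s⟫)
      ≤ ∑ s ∈ Icc 1 K, (s : ℝ) * (s + 1) * f x' (y s) :=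
    sum_le_sum fun s hs => mul_le_mul_of_nonneg_left
      (by linarith [hconv _ (hyY s (mem_Icc.1 hs).1) _ hx' _ (hzX s (mem_Icc.1 hs).1)])
      (by positivity)
  have havg := Finset.sum_mul_le_sum_mul_centerMass_of_le_inner (h := f x') (t := Icc 1 K)
    (c := fun s : ℕ => (s : ℝ) * (s + 1)) (p := y) hYconv
    (fun y₁ h₁ y₂ h₂ => (hconc x' hx' y₁ h₁ y₂ h₂).trans (sub_le_self _ (by positivity)))
    (fun s _ => by positivity) (by rw [sum_Icc_mul_succ]; positivity)
    (fun s hs => hyY s (mem_Icc.1 hs).1)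
  rw [sum_Icc_mul_succ, centerMass, sum_Icc_mul_succ, inv_div, ← hybar] at havg
  have hgap : (K : ℝ) * (K + 1) * (K + 2) * (f (x K) y' - f x' (ybar K)) ≤
      K * (11 * κ * L * DX ^ 2) := by
    linarith [mul_le_mul_of_nonneg_left (hmax K hK y' hy')
      (by positivity : (0 : ℝ) ≤ K * (K + 1) * (K + 2))]
  have hK₀ : (0 : ℝ) < K := by exact_mod_cast hK
  rw [le_div_iff₀ (by positivity)]
  exact le_of_mul_le_mul_left (by linarith) hK₀

/-- Theorem 1, MPCGS convergence: under Assumption 1, if the iterates of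
Mirror-Prox Conditional Gradient Sliding satisfy the approximate-maximizer condition (i)
and the Wolfe-gap condition (ii) with the prescribed parameters, then for every `k ≥ 1`
the primal-dual gap of `(x_k, ȳ_k)` is at most `11κL·D_X²/((k+1)(k+2))`. -/
theorem mpcgs_convergence
    {n m : ℕ}
    (X : Set (EuclideanSpace ℝ (Fin n))) (Y : Set (EuclideanSpace ℝ (Fin m)))
    (hXconv : Convex ℝ X) (hXcomp : IsCompact X) (hXne : X.Nonempty)
    (hYconv : Convex ℝ Y) (hYcomp : IsCompact Y) (hYne : Y.Nonempty)
    (DX DY : ℝ)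
    (hDX : ∀ x₁ ∈ X, ∀ x₂ ∈ X, ‖x₁ - x₂‖ ≤ DX)
    (hDY : ∀ y₁ ∈ Y, ∀ y₂ ∈ Y, ‖y₁ - y₂‖ ≤ DY)
    (f : EuclideanSpace ℝ (Fin n) → EuclideanSpace ℝ (Fin m) → ℝ)
    (gx : EuclideanSpace ℝ (Fin n) → EuclideanSpace ℝ (Fin m) → EuclideanSpace ℝ (Fin n))
    (gy : EuclideanSpace ℝ (Fin n) → EuclideanSpace ℝ (Fin m) → EuclideanSpace ℝ (Fin m))
    (hgx : ∀ x y, HasGradientAt (fun x' => f x' y) (gx x y) x)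
    (hgy : ∀ x y, HasGradientAt (fun y' => f x y') (gy x y) y)
    (L μ κ : ℝ) (hμ : 0 < μ) (hμL : μ ≤ L) (hκ : κ = L / μ)
    (hsmooth : ∀ x₁ ∈ X, ∀ x₂ ∈ X, ∀ y₁ ∈ Y, ∀ y₂ ∈ Y,
      ‖gx x₁ y₁ - gx x₂ y₂‖ ^ 2 + ‖gy x₁ y₁ - gy x₂ y₂‖ ^ 2 ≤
        L ^ 2 * (‖x₁ - x₂‖ ^ 2 + ‖y₁ - y₂‖ ^ 2))
    (hconv : ∀ y ∈ Y, ∀ x₁ ∈ X, ∀ x₂ ∈ X,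
      f x₁ y - f x₂ y ≥ ⟪gx x₂ y, x₁ - x₂⟫)
    (hconc : ∀ x ∈ X, ∀ y₁ ∈ Y, ∀ y₂ ∈ Y,
      f x y₁ - f x y₂ ≤ ⟪gy x y₂, y₁ - y₂⟫ - μ / 2 * ‖y₁ - y₂‖ ^ 2)
    -- parameter sequences
    (γ α ζ ε : ℕ → ℝ)
    (hγ : ∀ k, γ k = 3 / ((k : ℝ) + 2))
    (hα : ∀ k, α k = 6 * κ * L / ((k : ℝ) + 1))
    (hζ : ∀ k, ζ k = L * DX ^ 2 / (384 * (k : ℝ) * ((k : ℝ) + 1)))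
    (hε : ∀ k, ε k = κ * L * DX ^ 2 / ((k : ℝ) * ((k : ℝ) + 1) * ((k : ℝ) + 2)))
    -- iterate sequences
    (x v z : ℕ → EuclideanSpace ℝ (Fin n)) (y : ℕ → EuclideanSpace ℝ (Fin m))
    (hx0 : x 0 ∈ X) (hv0 : v 0 = x 0) (hy0 : y 0 ∈ Y)
    (hvX : ∀ k, 1 ≤ k → v k ∈ X) (hyY : ∀ k, 1 ≤ k → y k ∈ Y)
    (hz : ∀ k, 1 ≤ k → z k = (1 - γ k) • x (k - 1) + γ k • v (k - 1))
    (hxk : ∀ k, 1 ≤ k → x k = (1 - γ k) • x (k - 1) + γ k • v k)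
    -- (i): y_k is an ε_k-approximate maximizer of f(x_k, ·)
    (hmax : ∀ k, 1 ≤ k → ∀ y' ∈ Y, f (x k) (y k) ≥ f (x k) y' - ε k)
    -- (ii): Wolfe-gap condition from the CndG procedure
    (hwolfe : ∀ k, 1 ≤ k → ∀ x' ∈ X,
      ⟪gx (z k) (y k) + α k • (v k - v (k - 1)), v k - x'⟫ ≤ ζ k)
    -- the averaged dual iterate
    (ybar : ℕ → EuclideanSpace ℝ (Fin m))
    (hybar : ∀ k, ybar k = (3 / ((k : ℝ) * ((k : ℝ) + 1) * ((k : ℝ) + 2))) •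
      ∑ s ∈ Finset.Icc 1 k, ((s : ℝ) * ((s : ℝ) + 1)) • y s) :
    ∀ k, 1 ≤ k → ∀ y' ∈ Y, ∀ x' ∈ X,
      f (x k) y' - f x' (ybar k) ≤
        11 * κ * L * DX ^ 2 / (((k : ℝ) + 1) * ((k : ℝ) + 2)) :=
  mpcgs_convergence_general X Y hXconv hYconv DX hDX f gx gy hgx L μ κ hμ hμL hκ hsmooth hconv hconc
    γ α ζ ε hγ hα hζ hε x v z y hx0 hv0 hvX hyY hz hxk hmax hwolfe ybar hybar
end

section
/- The map y* : X → Y defined by y*(x) = argmax_{y∈Y} f(x, y) (the maximizer is unique by strong concavity) is κ-Lipschitz continuous: ‖y*(x_1) − y*(x_2)‖ ≤ κ·‖x_1 − x_2‖ for all x_1, x_2 ∈ X, where κ = L/μ. -/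
/-!
At a maximizer `a` of a differentiable function over a convex set, the gradient satisfies
the variational inequality `⟪∇φ(a), y - a⟫ ≤ 0` for all feasible `y`. Adding the two variational
inequalities at `y*(x₁)` and `y*(x₂)` to the strong monotonicity `μ‖a - b‖² ≤ ⟪∇φ(b) - ∇φ(a), a - b⟫`
of the strongly concave `f(x₁, ·)` gives `μ‖y*(x₁) - y*(x₂)‖ ≤ ‖∇_y f(x₁, y*(x₂)) - ∇_y f(x₂, y*(x₂))‖`,
and smoothness bounds the right-hand side by `L‖x₁ - x₂‖`.
-/

open scoped RealInnerProductSpace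

section

variable {F : Type*} [NormedAddCommGroup F] [InnerProductSpace ℝ F]

theorem IsMaxOn.inner_gradient_sub_nonpos [CompleteSpace F] {φ : F → ℝ} {s : Set F}
    {a y g : F} (hs : Convex ℝ s) (hmax : IsMaxOn φ s a) (hφ : HasGradientAt φ g a)
    (ha : a ∈ s) (hy : y ∈ s) : ⟪g, y - a⟫ ≤ 0 := by
  simpa using hmax.localize.hasFDerivWithinAt_nonpos hφ.hasFDerivAt.hasFDerivWithinAt
    (sub_mem_posTangentConeAt_of_segment_subset (hs.segment_subset ha hy))

theorem mul_norm_sub_sq_le_inner_of_strongConcave {φ : F → ℝ} {g : F → F} {s : Set F} {μ : ℝ}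
    (hconc : ∀ y₁ ∈ s, ∀ y₂ ∈ s, φ y₁ - φ y₂ ≤ ⟪g y₂, y₁ - y₂⟫ - μ / 2 * ‖y₁ - y₂‖ ^ 2)
    {a b : F} (ha : a ∈ s) (hb : b ∈ s) :
    μ * ‖a - b‖ ^ 2 ≤ ⟪g b - g a, a - b⟫ := by
  have hab := hconc a ha b hb
  have hba := hconc b hb a ha
  rw [norm_sub_rev b a, ← neg_sub a b, inner_neg_right] at hba
  rw [inner_sub_left]
  linarith

theorem mul_norm_sub_le_of_isMaxOn_of_strongConcave [CompleteSpace F]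
    {φ₁ φ₂ : F → ℝ} {g₁ g₂ : F → F} {s : Set F} {μ : ℝ} {a₁ a₂ : F}
    (hs : Convex ℝ s) (ha₁ : a₁ ∈ s) (ha₂ : a₂ ∈ s)
    (hmax₁ : IsMaxOn φ₁ s a₁) (hmax₂ : IsMaxOn φ₂ s a₂)
    (hg₁ : HasGradientAt φ₁ (g₁ a₁) a₁) (hg₂ : HasGradientAt φ₂ (g₂ a₂) a₂)
    (hconc : ∀ y₁ ∈ s, ∀ y₂ ∈ s, φ₁ y₁ - φ₁ y₂ ≤ ⟪g₁ y₂, y₁ - y₂⟫ - μ / 2 * ‖y₁ - y₂‖ ^ 2) :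
    μ * ‖a₁ - a₂‖ ≤ ‖g₁ a₂ - g₂ a₂‖ := by
  have hmono := mul_norm_sub_sq_le_inner_of_strongConcave hconc ha₁ ha₂
  have hopt₁ := hmax₁.inner_gradient_sub_nonpos hs hg₁ ha₁ ha₂
  have hopt₂ := hmax₂.inner_gradient_sub_nonpos hs hg₂ ha₂ ha₁
  rw [← neg_sub a₁ a₂, inner_neg_right] at hopt₁
  have key : μ * ‖a₁ - a₂‖ * ‖a₁ - a₂‖ ≤ ‖g₁ a₂ - g₂ a₂‖ * ‖a₁ - a₂‖ :=
    calc μ * ‖a₁ - a₂‖ * ‖a₁ - a₂‖ = μ * ‖a₁ - a₂‖ ^ 2 := by ring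
      _ ≤ ⟪g₁ a₂ - g₂ a₂, a₁ - a₂⟫ := by rw [inner_sub_left] at hmono ⊢; linarith
      _ ≤ ‖g₁ a₂ - g₂ a₂‖ * ‖a₁ - a₂‖ := real_inner_le_norm _ _
  rcases (norm_nonneg (a₁ - a₂)).eq_or_lt with h | h
  · rw [← h, mul_zero]; exact norm_nonneg _
  · exact le_of_mul_le_mul_right key h

end

theorem le_mul_of_sq_add_sq_le {a b c L : ℝ} (hL : 0 ≤ L) (hc : 0 ≤ c)
    (h : a ^ 2 + b ^ 2 ≤ L ^ 2 * c ^ 2) : b ≤ L * c :=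
  (abs_le_of_sq_le_sq' (by nlinarith [sq_nonneg a]) (by positivity)).2

theorem best_response_lipschitz_general
    {n m : ℕ}
    (X : Set (EuclideanSpace ℝ (Fin n))) (Y : Set (EuclideanSpace ℝ (Fin m)))
    (hYconv : Convex ℝ Y)
    (f : EuclideanSpace ℝ (Fin n) → EuclideanSpace ℝ (Fin m) → ℝ)
    (gx : EuclideanSpace ℝ (Fin n) → EuclideanSpace ℝ (Fin m) → EuclideanSpace ℝ (Fin n))
    (gy : EuclideanSpace ℝ (Fin n) → EuclideanSpace ℝ (Fin m) → EuclideanSpace ℝ (Fin m))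
    (hgy : ∀ x y, HasGradientAt (fun y' => f x y') (gy x y) y)
    (L μ κ : ℝ) (hμ : 0 < μ) (hμL : μ ≤ L) (hκ : κ = L / μ)
    (hsmooth : ∀ x₁ ∈ X, ∀ x₂ ∈ X, ∀ y₁ ∈ Y, ∀ y₂ ∈ Y,
      ‖gx x₁ y₁ - gx x₂ y₂‖ ^ 2 + ‖gy x₁ y₁ - gy x₂ y₂‖ ^ 2 ≤
        L ^ 2 * (‖x₁ - x₂‖ ^ 2 + ‖y₁ - y₂‖ ^ 2))
    (hconc : ∀ x ∈ X, ∀ y₁ ∈ Y, ∀ y₂ ∈ Y,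
      f x y₁ - f x y₂ ≤ ⟪gy x y₂, y₁ - y₂⟫ - μ / 2 * ‖y₁ - y₂‖ ^ 2)
    (ystar : EuclideanSpace ℝ (Fin n) → EuclideanSpace ℝ (Fin m))
    (hystarY : ∀ x ∈ X, ystar x ∈ Y)
    (hystar : ∀ x ∈ X, ∀ y ∈ Y, f x y ≤ f x (ystar x)) :
    ∀ x₁ ∈ X, ∀ x₂ ∈ X, ‖ystar x₁ - ystar x₂‖ ≤ κ * ‖x₁ - x₂‖ := by
  intro x₁ hx₁ x₂ hx₂
  have hy₂ := hystarY x₂ hx₂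
  have hgrad_perturb : ‖gy x₁ (ystar x₂) - gy x₂ (ystar x₂)‖ ≤ L * ‖x₁ - x₂‖ := by
    refine le_mul_of_sq_add_sq_le (a := ‖gx x₁ (ystar x₂) - gx x₂ (ystar x₂)‖)
      (hμ.le.trans hμL) (norm_nonneg _) ?_
    simpa using hsmooth x₁ hx₁ x₂ hx₂ _ hy₂ _ hy₂
  have hmaximizers : μ * ‖ystar x₁ - ystar x₂‖ ≤ ‖gy x₁ (ystar x₂) - gy x₂ (ystar x₂)‖ :=
    mul_norm_sub_le_of_isMaxOn_of_strongConcave hYconv (hystarY x₁ hx₁) hy₂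
      (isMaxOn_iff.2 (hystar x₁ hx₁)) (isMaxOn_iff.2 (hystar x₂ hx₂))
      (hgy x₁ _) (hgy x₂ _) (hconc x₁ hx₁)
  rw [hκ, div_mul_eq_mul_div, le_div_iff₀ hμ, mul_comm]
  exact hmaximizers.trans hgrad_perturb

/-- Under Assumption 1 (L-smooth, convex in x, μ-strongly-concave in y,
convex compact feasible sets), the best-response map `y*(x) = argmax_{y∈Y} f(x,y)` is
`κ`-Lipschitz on `X`, where `κ = L/μ`. -/
theorem best_response_lipschitz
    {n m : ℕ}
    (X : Set (EuclideanSpace ℝ (Fin n))) (Y : Set (EuclideanSpace ℝ (Fin m)))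
    (hXconv : Convex ℝ X) (hXcomp : IsCompact X) (hXne : X.Nonempty)
    (hYconv : Convex ℝ Y) (hYcomp : IsCompact Y) (hYne : Y.Nonempty)
    (DX DY : ℝ)
    (hDX : ∀ x₁ ∈ X, ∀ x₂ ∈ X, ‖x₁ - x₂‖ ≤ DX)
    (hDY : ∀ y₁ ∈ Y, ∀ y₂ ∈ Y, ‖y₁ - y₂‖ ≤ DY)
    (f : EuclideanSpace ℝ (Fin n) → EuclideanSpace ℝ (Fin m) → ℝ)
    (gx : EuclideanSpace ℝ (Fin n) → EuclideanSpace ℝ (Fin m) → EuclideanSpace ℝ (Fin n))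
    (gy : EuclideanSpace ℝ (Fin n) → EuclideanSpace ℝ (Fin m) → EuclideanSpace ℝ (Fin m))
    (hgx : ∀ x y, HasGradientAt (fun x' => f x' y) (gx x y) x)
    (hgy : ∀ x y, HasGradientAt (fun y' => f x y') (gy x y) y)
    (L μ κ : ℝ) (hμ : 0 < μ) (hμL : μ ≤ L) (hκ : κ = L / μ)
    (hsmooth : ∀ x₁ ∈ X, ∀ x₂ ∈ X, ∀ y₁ ∈ Y, ∀ y₂ ∈ Y,
      ‖gx x₁ y₁ - gx x₂ y₂‖ ^ 2 + ‖gy x₁ y₁ - gy x₂ y₂‖ ^ 2 ≤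
        L ^ 2 * (‖x₁ - x₂‖ ^ 2 + ‖y₁ - y₂‖ ^ 2))
    (hconv : ∀ y ∈ Y, ∀ x₁ ∈ X, ∀ x₂ ∈ X,
      f x₁ y - f x₂ y ≥ ⟪gx x₂ y, x₁ - x₂⟫)
    (hconc : ∀ x ∈ X, ∀ y₁ ∈ Y, ∀ y₂ ∈ Y,
      f x y₁ - f x y₂ ≤ ⟪gy x y₂, y₁ - y₂⟫ - μ / 2 * ‖y₁ - y₂‖ ^ 2)
    (ystar : EuclideanSpace ℝ (Fin n) → EuclideanSpace ℝ (Fin m))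
    (hystarY : ∀ x ∈ X, ystar x ∈ Y)
    (hystar : ∀ x ∈ X, ∀ y ∈ Y, f x y ≤ f x (ystar x)) :
    ∀ x₁ ∈ X, ∀ x₂ ∈ X, ‖ystar x₁ - ystar x₂‖ ≤ κ * ‖x₁ - x₂‖ :=
  best_response_lipschitz_general X Y hYconv f gx gy hgy L μ κ hμ hμL hκ hsmooth hconc ystar hystarY
    hystar
end

section
/- Fix z ∈ X, v ∈ ℝ^n, x' ∈ X, α > 0, ζ ≥ 0, ε_cgs ≥ 0. Let v* = argmin_{u∈X} { ⟨∇_x f(z, y*(x')), u⟩ + (α/2)‖u − v‖² }. Suppose y' ∈ Y satisfies f(x', y') ≥ max_{y∈Y} f(x', y) − ε_cgs, and suppose v' ∈ X satisfies the approximate optimality (Wolfe-gap) condition ⟨∇_x f(z, y') + α(v' − v), v' − u⟩ ≤ ζ for all u ∈ X. Then ‖v* − v'‖ ≤ √( 2κL·ε_cgs/α² + 2ζ/α ), where κ = L/μ. -/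
open scoped RealInnerProductSpace

/-!
Both `v*` and `v'` solve the variational inequality of the prox step `u ↦ ⟪g, u⟫ + α/2 ‖u - v‖²`,
`v*` exactly with `g = ∇ₓf(z, y*(x'))` and `v'` up to `ζ` with `g = ∇ₓf(z, y')`. Adding the two
inequalities, the `α`-strong monotonicity of the prox operator gives
`α ‖v* - v'‖² ≤ ζ + ‖∇ₓf(z, y*(x')) - ∇ₓf(z, y')‖ ‖v* - v'‖`. The gradient gap is at most
`L ‖y*(x') - y'‖`, and by quadratic growth of the `μ`-strongly concave `f(x', ·)` around its
maximizer, `μ/2 ‖y' - y*(x')‖² ≤ ε_cgs`.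
-/

section FirstOrder

variable {E : Type*} [NormedAddCommGroup E] [InnerProductSpace ℝ E] [CompleteSpace E]
  {φ : E → ℝ} {g a b : E} {s : Set E}

theorem inner_gradient_nonneg_of_isMinOn (hs : Convex ℝ s) (hmin : IsMinOn φ s a)
    (hφ : HasGradientAt φ g a) (ha : a ∈ s) (hb : b ∈ s) : 0 ≤ ⟪g, b - a⟫ := by
  simpa using hmin.localize.hasFDerivWithinAt_nonneg
    (hasGradientAt_iff_hasFDerivAt.mp hφ).hasFDerivWithinAt
    (sub_mem_posTangentConeAt_of_segment_subset (hs.segment_subset ha hb))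

theorem inner_gradient_nonpos_of_isMaxOn (hs : Convex ℝ s) (hmax : IsMaxOn φ s a)
    (hφ : HasGradientAt φ g a) (ha : a ∈ s) (hb : b ∈ s) : ⟪g, b - a⟫ ≤ 0 := by
  simpa using hmax.localize.hasFDerivWithinAt_nonpos
    (hasGradientAt_iff_hasFDerivAt.mp hφ).hasFDerivWithinAt
    (sub_mem_posTangentConeAt_of_segment_subset (hs.segment_subset ha hb))

end FirstOrder

theorem hasGradientAt_inner_add_mul_sq_norm_sub {E : Type*} [NormedAddCommGroup E]
    [InnerProductSpace ℝ E] [CompleteSpace E] (g v u : E) (α : ℝ) :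
    HasGradientAt (fun w => ⟪g, w⟫ + α / 2 * ‖w - v‖ ^ 2) (g + α • (u - v)) u := by
  have h := ((innerSL ℝ g).hasFDerivAt (x := u)).add
    (((hasFDerivAt_id u).sub_const v).norm_sq.const_mul (α / 2))
  rw [hasGradientAt_iff_hasFDerivAt]
  refine h.congr_fderiv ?_
  ext d
  simp only [id_eq, map_sub, ContinuousLinearMap.comp_id, add_apply, coe_innerSL_apply, smul_apply,
    sub_apply, nsmul_eq_mul, Nat.cast_ofNat, smul_eq_mul, map_add, map_smul,
    InnerProductSpace.toDual_apply_apply, add_right_inj]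
  ring

theorem sq_norm_sub_le_of_variational_inequalities {E : Type*} [NormedAddCommGroup E]
    [InnerProductSpace ℝ E] {g₁ g₂ v a b : E} {α ζ : ℝ} (hα : 0 < α)
    (h₁ : 0 ≤ ⟪g₁ + α • (a - v), b - a⟫) (h₂ : ⟪g₂ + α • (b - v), b - a⟫ ≤ ζ) :
    ‖a - b‖ ^ 2 ≤ ‖g₁ - g₂‖ ^ 2 / α ^ 2 + 2 * ζ / α := by
  have hdiff : ⟪g₂ + α • (b - v), b - a⟫ - ⟪g₁ + α • (a - v), b - a⟫ =
      α * ‖a - b‖ ^ 2 - ⟪g₁ - g₂, b - a⟫ := by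
    rw [← inner_sub_left, norm_sub_rev, ← real_inner_self_eq_norm_sq, ← real_inner_smul_left,
      ← inner_sub_left]
    congr 1
    module
  have hcs : ⟪g₁ - g₂, b - a⟫ ≤ ‖g₁ - g₂‖ * ‖a - b‖ :=
    (real_inner_le_norm _ _).trans_eq (by rw [norm_sub_rev b a])
  have hgap : α * ‖a - b‖ ^ 2 ≤ ζ + ‖g₁ - g₂‖ * ‖a - b‖ := by linarith
  rw [div_add_div _ _ (by positivity) hα.ne', le_div_iff₀ (by positivity)]
  -- AM-GM: `2 α G d ≤ G² + α² d²`
  nlinarith [sq_nonneg (‖g₁ - g₂‖ - α * ‖a - b‖)]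

theorem inexact_prox_point_close_general
    {n m : ℕ}
    (X : Set (EuclideanSpace ℝ (Fin n))) (Y : Set (EuclideanSpace ℝ (Fin m)))
    (hXconv : Convex ℝ X)
    (hYconv : Convex ℝ Y)
    (f : EuclideanSpace ℝ (Fin n) → EuclideanSpace ℝ (Fin m) → ℝ)
    (gx : EuclideanSpace ℝ (Fin n) → EuclideanSpace ℝ (Fin m) → EuclideanSpace ℝ (Fin n))
    (gy : EuclideanSpace ℝ (Fin n) → EuclideanSpace ℝ (Fin m) → EuclideanSpace ℝ (Fin m))
    (hgy : ∀ x y, HasGradientAt (fun y' => f x y') (gy x y) y)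
    (L μ κ : ℝ) (hμ : 0 < μ) (hκ : κ = L / μ)
    (hsmooth : ∀ x₁ ∈ X, ∀ x₂ ∈ X, ∀ y₁ ∈ Y, ∀ y₂ ∈ Y,
      ‖gx x₁ y₁ - gx x₂ y₂‖ ^ 2 + ‖gy x₁ y₁ - gy x₂ y₂‖ ^ 2 ≤
        L ^ 2 * (‖x₁ - x₂‖ ^ 2 + ‖y₁ - y₂‖ ^ 2))
    (hconc : ∀ x ∈ X, ∀ y₁ ∈ Y, ∀ y₂ ∈ Y,
      f x y₁ - f x y₂ ≤ ⟪gy x y₂, y₁ - y₂⟫ - μ / 2 * ‖y₁ - y₂‖ ^ 2)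
    -- the best-response map y*
    (ystar : EuclideanSpace ℝ (Fin n) → EuclideanSpace ℝ (Fin m))
    (hystarY : ∀ x ∈ X, ystar x ∈ Y)
    (hystar : ∀ x ∈ X, ∀ y ∈ Y, f x y ≤ f x (ystar x))
    -- data
    (z : EuclideanSpace ℝ (Fin n)) (hz : z ∈ X)
    (v : EuclideanSpace ℝ (Fin n))
    (x' : EuclideanSpace ℝ (Fin n)) (hx' : x' ∈ X)
    (α ζ εcgs : ℝ) (hα : 0 < α)
    (vstar : EuclideanSpace ℝ (Fin n)) (hvstarX : vstar ∈ X)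
    (hvstar : ∀ u ∈ X,
      ⟪gx z (ystar x'), vstar⟫ + α / 2 * ‖vstar - v‖ ^ 2 ≤
        ⟪gx z (ystar x'), u⟫ + α / 2 * ‖u - v‖ ^ 2)
    (y' : EuclideanSpace ℝ (Fin m)) (hy'Y : y' ∈ Y)
    (hy' : ∀ y ∈ Y, f x' y' ≥ f x' y - εcgs)
    (v' : EuclideanSpace ℝ (Fin n)) (hv'X : v' ∈ X)
    (hv' : ∀ u ∈ X, ⟪gx z y' + α • (v' - v), v' - u⟫ ≤ ζ) :
    ‖vstar - v'‖ ≤ Real.sqrt (2 * κ * L * εcgs / α ^ 2 + 2 * ζ / α) := by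
  have hysY := hystarY x' hx'
  have hgrowth : μ / 2 * ‖y' - ystar x'‖ ^ 2 ≤ εcgs := by
    have hopt := inner_gradient_nonpos_of_isMaxOn hYconv (isMaxOn_iff.mpr (hystar x' hx'))
      (hgy x' (ystar x')) hysY hy'Y
    linarith [hconc x' hx' y' hy'Y (ystar x') hysY, hy' (ystar x') hysY]
  have hlip : ‖gx z (ystar x') - gx z y'‖ ^ 2 ≤ L ^ 2 * ‖y' - ystar x'‖ ^ 2 := by
    have := hsmooth z hz z hz (ystar x') hysY y' hy'Y
    rw [sub_self, norm_zero, norm_sub_rev (ystar x')] at this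
    nlinarith [sq_nonneg ‖gy z (ystar x') - gy z y'‖]
  have hprox := inner_gradient_nonneg_of_isMinOn hXconv (isMinOn_iff.mpr hvstar)
    (hasGradientAt_inner_add_mul_sq_norm_sub _ v vstar α) hvstarX hv'X
  have hdist := sq_norm_sub_le_of_variational_inequalities hα hprox (hv' vstar hvstarX)
  refine Real.le_sqrt_of_sq_le (hdist.trans ?_)
  have hκL : 2 * κ * L * εcgs = L ^ 2 * (2 * εcgs / μ) := by
    rw [hκ]
    field_simp
  rw [hκL]
  gcongr ?_ / _ + _
  refine hlip.trans (mul_le_mul_of_nonneg_left ?_ (sq_nonneg L))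
  rw [le_div_iff₀ hμ]
  linarith

/-- If `y'` is an `ε_cgs`-approximate maximizer of `f(x',·)` over `Y` and
`v'` satisfies the Wolfe-gap condition `⟪∇ₓf(z,y') + α(v'−v), v'−u⟫ ≤ ζ` for all `u ∈ X`,
then `v'` is close to the exact proximal point
`v* = argmin_{u∈X}{⟪∇ₓf(z, y*(x')), u⟫ + (α/2)‖u−v‖²}`:
`‖v* − v'‖ ≤ √(2κL·ε_cgs/α² + 2ζ/α)`. -/
theorem inexact_prox_point_close
    {n m : ℕ}
    (X : Set (EuclideanSpace ℝ (Fin n))) (Y : Set (EuclideanSpace ℝ (Fin m)))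
    (hXconv : Convex ℝ X) (hXcomp : IsCompact X) (hXne : X.Nonempty)
    (hYconv : Convex ℝ Y) (hYcomp : IsCompact Y) (hYne : Y.Nonempty)
    (f : EuclideanSpace ℝ (Fin n) → EuclideanSpace ℝ (Fin m) → ℝ)
    (gx : EuclideanSpace ℝ (Fin n) → EuclideanSpace ℝ (Fin m) → EuclideanSpace ℝ (Fin n))
    (gy : EuclideanSpace ℝ (Fin n) → EuclideanSpace ℝ (Fin m) → EuclideanSpace ℝ (Fin m))
    (hgx : ∀ x y, HasGradientAt (fun x' => f x' y) (gx x y) x)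
    (hgy : ∀ x y, HasGradientAt (fun y' => f x y') (gy x y) y)
    (L μ κ : ℝ) (hμ : 0 < μ) (hμL : μ ≤ L) (hκ : κ = L / μ)
    (hsmooth : ∀ x₁ ∈ X, ∀ x₂ ∈ X, ∀ y₁ ∈ Y, ∀ y₂ ∈ Y,
      ‖gx x₁ y₁ - gx x₂ y₂‖ ^ 2 + ‖gy x₁ y₁ - gy x₂ y₂‖ ^ 2 ≤
        L ^ 2 * (‖x₁ - x₂‖ ^ 2 + ‖y₁ - y₂‖ ^ 2))
    (hconv : ∀ y ∈ Y, ∀ x₁ ∈ X, ∀ x₂ ∈ X,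
      f x₁ y - f x₂ y ≥ ⟪gx x₂ y, x₁ - x₂⟫)
    (hconc : ∀ x ∈ X, ∀ y₁ ∈ Y, ∀ y₂ ∈ Y,
      f x y₁ - f x y₂ ≤ ⟪gy x y₂, y₁ - y₂⟫ - μ / 2 * ‖y₁ - y₂‖ ^ 2)
    -- the best-response map y*
    (ystar : EuclideanSpace ℝ (Fin n) → EuclideanSpace ℝ (Fin m))
    (hystarY : ∀ x ∈ X, ystar x ∈ Y)
    (hystar : ∀ x ∈ X, ∀ y ∈ Y, f x y ≤ f x (ystar x))
    -- data
    (z : EuclideanSpace ℝ (Fin n)) (hz : z ∈ X)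
    (v : EuclideanSpace ℝ (Fin n))
    (x' : EuclideanSpace ℝ (Fin n)) (hx' : x' ∈ X)
    (α ζ εcgs : ℝ) (hα : 0 < α) (hζ : 0 ≤ ζ) (hεcgs : 0 ≤ εcgs)
    (vstar : EuclideanSpace ℝ (Fin n)) (hvstarX : vstar ∈ X)
    (hvstar : ∀ u ∈ X,
      ⟪gx z (ystar x'), vstar⟫ + α / 2 * ‖vstar - v‖ ^ 2 ≤
        ⟪gx z (ystar x'), u⟫ + α / 2 * ‖u - v‖ ^ 2)
    (y' : EuclideanSpace ℝ (Fin m)) (hy'Y : y' ∈ Y)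
    (hy' : ∀ y ∈ Y, f x' y' ≥ f x' y - εcgs)
    (v' : EuclideanSpace ℝ (Fin n)) (hv'X : v' ∈ X)
    (hv' : ∀ u ∈ X, ⟪gx z y' + α • (v' - v), v' - u⟫ ≤ ζ) :
    ‖vstar - v'‖ ≤ Real.sqrt (2 * κ * L * εcgs / α ^ 2 + 2 * ζ / α) :=
  inexact_prox_point_close_general X Y hXconv hYconv f gx gy hgy L μ κ hμ hκ hsmooth hconc ystar
    hystarY hystar z hz v x' hx' α ζ εcgs hα vstar hvstarX hvstar y' hy'Y hy' v' hv'X hv'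
end

section
/- Let 0 ≤ γ ≤ 1 and let x_{k−1}, v_{k−1}, v_k ∈ X with z_k = (1−γ)x_{k−1} + γ v_{k−1} and x_k = (1−γ)x_{k−1} + γ v_k. Then for every x̃ ∈ X and every y ∈ Y: f(x_k, y) ≤ (1−γ) f(x_{k−1}, y) + γ f(x̃, y) + γ ⟨∇_x f(z_k, y), v_k − x̃⟩ + (γ²L/2)‖v_k − v_{k−1}‖². -/
/-!
Smoothness in `x` gives the descent inequality
`f(x_k) ≤ f(z_k) + ⟪∇ₓf(z_k), x_k − z_k⟫ + (L/2)‖x_k − z_k‖²`, where `x_k − z_k = γ(v_k − v_{k−1})`.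
Splitting `x_k − z_k = (1−γ)(x_{k−1} − z_k) + γ(x̃ − z_k) + γ(v_k − x̃)` and bounding the first two
inner products by first-order convexity at `z_k` produces the right-hand side.
-/

open Set
open scoped RealInnerProductSpace NNReal

theorem le_add_deriv_add_half_of_deriv_le {φ φ' : ℝ → ℝ} {M : ℝ}
    (hφ : ∀ t ∈ Icc (0 : ℝ) 1, HasDerivAt φ (φ' t) t)
    (hφ' : ∀ t ∈ Ico (0 : ℝ) 1, φ' t ≤ φ' 0 + M * t) :
    φ 1 ≤ φ 0 + φ' 0 + M / 2 := by
  have hB : ∀ t, HasDerivAt (fun t => φ 0 + t * φ' 0 + M / 2 * t ^ 2) (φ' 0 + M * t) t := by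
    intro t
    refine ((((hasDerivAt_id' t).mul_const (φ' 0)).const_add (φ 0)).add
      ((hasDerivAt_pow 2 t).const_mul (M / 2))).congr_deriv ?_
    ring
  simpa using image_le_of_deriv_right_le_deriv_boundary
    (fun t ht => (hφ t ht).continuousAt.continuousWithinAt)
    (fun t ht => (hφ t (Ico_subset_Icc_self ht)).hasDerivWithinAt) (by simp)
    (fun t _ => (hB t).continuousAt.continuousWithinAt) (fun t _ => (hB t).hasDerivWithinAt) hφ'
    (right_mem_Icc.2 zero_le_one)

section Gradient

variable {E : Type*} [NormedAddCommGroup E] [InnerProductSpace ℝ E] [CompleteSpace E]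

theorem HasGradientAt.hasDerivAt_comp_add_smul_sub {f : E → ℝ} {g a b : E} {t : ℝ}
    (hf : HasGradientAt f g (a + t • (b - a))) :
    HasDerivAt (fun t : ℝ => f (a + t • (b - a))) ⟪g, b - a⟫ t := by
  have hline : HasDerivAt (fun t : ℝ => a + t • (b - a)) (b - a) t := by
    simpa using ((hasDerivAt_id t).smul_const (b - a)).const_add a
  have h := hf.hasFDerivAt.comp_hasDerivAt t hline
  simp only [InnerProductSpace.toDual_apply_apply] at h
  exact h

theorem Convex.le_add_inner_add_of_lipschitzOnWith_gradient {s : Set E} (hs : Convex ℝ s)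
    {f : E → ℝ} {g : E → E} {K : ℝ≥0} (hf : ∀ x ∈ s, HasGradientAt f (g x) x)
    (hg : LipschitzOnWith K g s) {a b : E} (ha : a ∈ s) (hb : b ∈ s) :
    f b ≤ f a + ⟪g a, b - a⟫ + K / 2 * ‖b - a‖ ^ 2 := by
  have hseg : ∀ t ∈ Icc (0 : ℝ) 1, a + t • (b - a) ∈ s := fun t ht => hs.add_smul_sub_mem ha hb ht
  have hbound : ∀ t ∈ Ico (0 : ℝ) 1,
      ⟪g (a + t • (b - a)), b - a⟫ ≤ ⟪g (a + (0 : ℝ) • (b - a)), b - a⟫ + K * ‖b - a‖ ^ 2 * t := by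
    intro t ht
    have hlip := lipschitzOnWith_iff_norm_sub_le.1 hg (hseg t (Ico_subset_Icc_self ht)) ha
    rw [add_sub_cancel_left, norm_smul, Real.norm_of_nonneg ht.1] at hlip
    calc ⟪g (a + t • (b - a)), b - a⟫
        = ⟪g a, b - a⟫ + ⟪g (a + t • (b - a)) - g a, b - a⟫ := by rw [inner_sub_left]; ring
      _ ≤ ⟪g a, b - a⟫ + ‖g (a + t • (b - a)) - g a‖ * ‖b - a‖ := by
        gcongr; exact real_inner_le_norm _ _
      _ ≤ ⟪g a, b - a⟫ + K * (t * ‖b - a‖) * ‖b - a‖ := by gcongr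
      _ = _ := by simp only [zero_smul, add_zero]; ring
  simpa [mul_div_right_comm] using le_add_deriv_add_half_of_deriv_le
    (fun t ht => (hf _ (hseg t ht)).hasDerivAt_comp_add_smul_sub) hbound

end Gradient

theorem lipschitzOnWith_left_of_sq_norm_sub_add_sq_norm_sub_le {E F G H : Type*}
    [SeminormedAddCommGroup E] [SeminormedAddCommGroup F] [SeminormedAddCommGroup G]
    [SeminormedAddCommGroup H] {X : Set E} {Y : Set F} {gx : E → F → G} {gy : E → F → H}
    {L : ℝ} (hL : 0 ≤ L)
    (h : ∀ x₁ ∈ X, ∀ x₂ ∈ X, ∀ y₁ ∈ Y, ∀ y₂ ∈ Y,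
      ‖gx x₁ y₁ - gx x₂ y₂‖ ^ 2 + ‖gy x₁ y₁ - gy x₂ y₂‖ ^ 2 ≤
        L ^ 2 * (‖x₁ - x₂‖ ^ 2 + ‖y₁ - y₂‖ ^ 2))
    {y : F} (hy : y ∈ Y) :
    LipschitzOnWith L.toNNReal (fun x => gx x y) X := by
  refine lipschitzOnWith_iff_norm_sub_le.2 fun x₁ h₁ x₂ h₂ => ?_
  have hsq := h x₁ h₁ x₂ h₂ y hy y hy
  rw [sub_self, norm_zero, zero_pow two_ne_zero, add_zero] at hsq
  rw [Real.coe_toNNReal L hL]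
  exact pow_le_pow_iff_left₀ (norm_nonneg _) (by positivity) two_ne_zero |>.1
    (by nlinarith [sq_nonneg ‖gy x₁ y - gy x₂ y‖])

theorem smoothness_convexity_step_bound_general
    {n m : ℕ}
    (X : Set (EuclideanSpace ℝ (Fin n))) (Y : Set (EuclideanSpace ℝ (Fin m)))
    (hXconv : Convex ℝ X)
    (f : EuclideanSpace ℝ (Fin n) → EuclideanSpace ℝ (Fin m) → ℝ)
    (gx : EuclideanSpace ℝ (Fin n) → EuclideanSpace ℝ (Fin m) → EuclideanSpace ℝ (Fin n))
    (gy : EuclideanSpace ℝ (Fin n) → EuclideanSpace ℝ (Fin m) → EuclideanSpace ℝ (Fin m))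
    (hgx : ∀ x y, HasGradientAt (fun x' => f x' y) (gx x y) x)
    (L μ : ℝ) (hμ : 0 < μ) (hμL : μ ≤ L)
    (hsmooth : ∀ x₁ ∈ X, ∀ x₂ ∈ X, ∀ y₁ ∈ Y, ∀ y₂ ∈ Y,
      ‖gx x₁ y₁ - gx x₂ y₂‖ ^ 2 + ‖gy x₁ y₁ - gy x₂ y₂‖ ^ 2 ≤
        L ^ 2 * (‖x₁ - x₂‖ ^ 2 + ‖y₁ - y₂‖ ^ 2))
    (hconv : ∀ y ∈ Y, ∀ x₁ ∈ X, ∀ x₂ ∈ X,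
      f x₁ y - f x₂ y ≥ ⟪gx x₂ y, x₁ - x₂⟫)
    (γ : ℝ) (hγ0 : 0 ≤ γ) (hγ1 : γ ≤ 1)
    (xprev vprev vk zk xk : EuclideanSpace ℝ (Fin n))
    (hxprev : xprev ∈ X) (hvprev : vprev ∈ X) (hvk : vk ∈ X)
    (hzk : zk = (1 - γ) • xprev + γ • vprev)
    (hxk : xk = (1 - γ) • xprev + γ • vk) :
    ∀ xtilde ∈ X, ∀ y ∈ Y,
      f xk y ≤ (1 - γ) * f xprev y + γ * f xtilde y +
        γ * ⟪gx zk y, vk - xtilde⟫ + γ ^ 2 * L / 2 * ‖vk - vprev‖ ^ 2 := by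
  intro xtilde hxtilde y hy
  have hL : 0 ≤ L := hμ.le.trans hμL
  have hzkX : zk ∈ X := hzk ▸ hXconv hxprev hvprev (by linarith) hγ0 (by ring)
  have hxkX : xk ∈ X := hxk ▸ hXconv hxprev hvk (by linarith) hγ0 (by ring)
  have hdescent := hXconv.le_add_inner_add_of_lipschitzOnWith_gradient (fun x _ => hgx x y)
    (lipschitzOnWith_left_of_sq_norm_sub_add_sq_norm_sub_le hL hsmooth hy) hzkX hxkX
  rw [Real.coe_toNNReal L hL] at hdescent
  have hstep : ‖xk - zk‖ ^ 2 = γ ^ 2 * ‖vk - vprev‖ ^ 2 := by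
    rw [show xk - zk = γ • (vk - vprev) by rw [hxk, hzk]; module, norm_smul,
      Real.norm_of_nonneg hγ0, mul_pow]
  have hsplit : ⟪gx zk y, xk - zk⟫ = (1 - γ) * ⟪gx zk y, xprev - zk⟫ +
      γ * ⟪gx zk y, xtilde - zk⟫ + γ * ⟪gx zk y, vk - xtilde⟫ := by
    rw [show xk - zk = (1 - γ) • (xprev - zk) + γ • (xtilde - zk) + γ • (vk - xtilde) by
      rw [hxk, hzk]; module]
    simp only [inner_add_right, real_inner_smul_right]
  have hprev := mul_le_mul_of_nonneg_left (hconv y hy xprev hxprev zk hzkX) (sub_nonneg.2 hγ1)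
  have htilde := mul_le_mul_of_nonneg_left (hconv y hy xtilde hxtilde zk hzkX) hγ0
  rw [hstep, hsplit] at hdescent
  linarith

/-- For `0 ≤ γ ≤ 1` and `z_k = (1−γ)x_{k−1} + γv_{k−1}`,
`x_k = (1−γ)x_{k−1} + γv_k`, smoothness and convexity in `x` give, for all `x̃ ∈ X`, `y ∈ Y`:
`f(x_k,y) ≤ (1−γ)f(x_{k−1},y) + γf(x̃,y) + γ⟪∇ₓf(z_k,y), v_k − x̃⟫ + (γ²L/2)‖v_k − v_{k−1}‖²`. -/
theorem smoothness_convexity_step_bound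
    {n m : ℕ}
    (X : Set (EuclideanSpace ℝ (Fin n))) (Y : Set (EuclideanSpace ℝ (Fin m)))
    (hXconv : Convex ℝ X) (hXcomp : IsCompact X) (hXne : X.Nonempty)
    (hYconv : Convex ℝ Y) (hYcomp : IsCompact Y) (hYne : Y.Nonempty)
    (f : EuclideanSpace ℝ (Fin n) → EuclideanSpace ℝ (Fin m) → ℝ)
    (gx : EuclideanSpace ℝ (Fin n) → EuclideanSpace ℝ (Fin m) → EuclideanSpace ℝ (Fin n))
    (gy : EuclideanSpace ℝ (Fin n) → EuclideanSpace ℝ (Fin m) → EuclideanSpace ℝ (Fin m))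
    (hgx : ∀ x y, HasGradientAt (fun x' => f x' y) (gx x y) x)
    (hgy : ∀ x y, HasGradientAt (fun y' => f x y') (gy x y) y)
    (L μ : ℝ) (hμ : 0 < μ) (hμL : μ ≤ L)
    (hsmooth : ∀ x₁ ∈ X, ∀ x₂ ∈ X, ∀ y₁ ∈ Y, ∀ y₂ ∈ Y,
      ‖gx x₁ y₁ - gx x₂ y₂‖ ^ 2 + ‖gy x₁ y₁ - gy x₂ y₂‖ ^ 2 ≤
        L ^ 2 * (‖x₁ - x₂‖ ^ 2 + ‖y₁ - y₂‖ ^ 2))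
    (hconv : ∀ y ∈ Y, ∀ x₁ ∈ X, ∀ x₂ ∈ X,
      f x₁ y - f x₂ y ≥ ⟪gx x₂ y, x₁ - x₂⟫)
    (hconc : ∀ x ∈ X, ∀ y₁ ∈ Y, ∀ y₂ ∈ Y,
      f x y₁ - f x y₂ ≤ ⟪gy x y₂, y₁ - y₂⟫ - μ / 2 * ‖y₁ - y₂‖ ^ 2)
    (γ : ℝ) (hγ0 : 0 ≤ γ) (hγ1 : γ ≤ 1)
    (xprev vprev vk zk xk : EuclideanSpace ℝ (Fin n))
    (hxprev : xprev ∈ X) (hvprev : vprev ∈ X) (hvk : vk ∈ X)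
    (hzk : zk = (1 - γ) • xprev + γ • vprev)
    (hxk : xk = (1 - γ) • xprev + γ • vk) :
    ∀ xtilde ∈ X, ∀ y ∈ Y,
      f xk y ≤ (1 - γ) * f xprev y + γ * f xtilde y +
        γ * ⟪gx zk y, vk - xtilde⟫ + γ ^ 2 * L / 2 * ‖vk - vprev‖ ^ 2 :=
  smoothness_convexity_step_bound_general X Y hXconv f gx gy hgx L μ hμ hμL hsmooth hconv γ hγ0 hγ1
    xprev vprev vk zk xk hxprev hvprev hvk hzk hxk
end

section
/- Let 0 ≤ γ ≤ 1, α ≥ Lγ, ζ ≥ 0, and let x_{k−1}, v_{k−1}, v_k ∈ X with z_k = (1−γ)x_{k−1} + γ v_{k−1} and x_k = (1−γ)x_{k−1} + γ v_k. Suppose max_{x∈X} ⟨∇_x f(z_k, y_k) + α(v_k − v_{k−1}), v_k − x⟩ ≤ ζ for some y_k ∈ Y. Then for every x̃ ∈ X: f(x_k, y_k) − f(x̃, y_k) ≤ (1−γ)( f(x_{k−1}, y_k) − f(x̃, y_k) ) + γζ + (γα/2)( ‖v_{k−1} − x̃‖² − ‖v_k − x̃‖² ) + (γ/2)(Lγ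 − α)‖v_k − v_{k−1}‖². -/
open scoped RealInnerProductSpace

/-!
Since `x_k - z_k = γ (v_k - v_{k-1})`, the descent lemma for the `L`-smooth function `f(·, y_k)`
bounds `f(x_k, y_k)` by its linearization at `z_k` plus `Lγ²/2 ‖v_k - v_{k-1}‖²`. Writing
`x_k - z_k = (1-γ)(x_{k-1} - z_k) + γ(x̃ - z_k) + γ(v_k - x̃)`, convexity controls the first two
linear terms by `f(x_{k-1}, y_k) - f(z_k, y_k)` and `f(x̃, y_k) - f(z_k, y_k)`, and the Wolfe-gap
condition at `x = x̃` controls the third; the `α`-term is turned into the difference of squared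
distances by the polarization identity.
-/

section

variable {E : Type*} [NormedAddCommGroup E] [InnerProductSpace ℝ E]

open AffineMap Set

theorem HasGradientAt.hasDerivAt_comp_lineMap [CompleteSpace E] {f : E → ℝ} {g a b : E} {t : ℝ}
    (hf : HasGradientAt f g (lineMap a b t)) :
    HasDerivAt (fun t => f (lineMap a b t)) ⟪g, b - a⟫ t := by
  have h := hf.hasFDerivAt.comp_hasDerivAt t (hasDerivAt_lineMap (a := a) (b := b) (x := t))
  simp only [InnerProductSpace.toDual_apply_apply] at h
  exact h

theorem Convex.descent_lemma [CompleteSpace E] {s : Set E} (hs : Convex ℝ s) {f : E → ℝ}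
    {g : E → E} {L : ℝ} (hf : ∀ x ∈ s, HasGradientAt f (g x) x)
    (hg : ∀ x ∈ s, ∀ y ∈ s, ‖g x - g y‖ ≤ L * ‖x - y‖) {a b : E} (ha : a ∈ s) (hb : b ∈ s) :
    f b ≤ f a + ⟪g a, b - a⟫ + L / 2 * ‖b - a‖ ^ 2 := by
  have hφ : ∀ t ∈ Icc (0 : ℝ) 1,
      HasDerivAt (fun t => f (lineMap a b t)) ⟪g (lineMap a b t), b - a⟫ t := fun t ht =>
    (hf _ (hs.lineMap_mem ha hb ht)).hasDerivAt_comp_lineMap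
  have hB : ∀ t : ℝ, HasDerivAt (fun t => f a + t * ⟪g a, b - a⟫ + L / 2 * t ^ 2 * ‖b - a‖ ^ 2)
      (⟪g a, b - a⟫ + L * t * ‖b - a‖ ^ 2) t := fun t => by
    refine ((((hasDerivAt_id' t).mul_const ⟪g a, b - a⟫).const_add (f a)).add
      (((hasDerivAt_pow 2 t).const_mul (L / 2)).mul_const (‖b - a‖ ^ 2))).congr_deriv ?_
    push_cast; ring
  have hslope : ∀ t ∈ Ico (0 : ℝ) 1,
      ⟪g (lineMap a b t), b - a⟫ ≤ ⟪g a, b - a⟫ + L * t * ‖b - a‖ ^ 2 := fun t ht => by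
    have hdist : ‖lineMap a b t - a‖ = t * ‖b - a‖ := by
      rw [← vsub_eq_sub, lineMap_vsub_left, vsub_eq_sub, norm_smul, Real.norm_of_nonneg ht.1]
    calc ⟪g (lineMap a b t), b - a⟫
        = ⟪g a, b - a⟫ + ⟪g (lineMap a b t) - g a, b - a⟫ := by rw [inner_sub_left]; ring
      _ ≤ ⟪g a, b - a⟫ + ‖g (lineMap a b t) - g a‖ * ‖b - a‖ := by
          gcongr; exact real_inner_le_norm _ _
      _ ≤ ⟪g a, b - a⟫ + L * ‖lineMap a b t - a‖ * ‖b - a‖ := by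
          gcongr; exact hg _ (hs.lineMap_mem ha hb (Ico_subset_Icc_self ht)) _ ha
      _ = ⟪g a, b - a⟫ + L * t * ‖b - a‖ ^ 2 := by rw [hdist]; ring
  have hfence := image_le_of_deriv_right_le_deriv_boundary
    (fun t ht => (hφ t ht).continuousAt.continuousWithinAt)
    (fun t ht => (hφ t (Ico_subset_Icc_self ht)).hasDerivWithinAt)
    (by simp) (fun t _ => (hB t).continuousAt.continuousWithinAt)
    (fun t _ => (hB t).hasDerivWithinAt) hslope (right_mem_Icc.2 zero_le_one)
  simpa using hfence

theorem sub_le_of_descent_of_wolfe_gap {f : E → ℝ} {d xprev vprev vk zk xk xt : E}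
    {L γ α ζ : ℝ} (hγ0 : 0 ≤ γ) (hγ1 : γ ≤ 1)
    (hzk : zk = (1 - γ) • xprev + γ • vprev) (hxk : xk = (1 - γ) • xprev + γ • vk)
    (hdesc : f xk ≤ f zk + ⟪d, xk - zk⟫ + L / 2 * ‖xk - zk‖ ^ 2)
    (hprev : ⟪d, xprev - zk⟫ ≤ f xprev - f zk) (hxt : ⟪d, xt - zk⟫ ≤ f xt - f zk)
    (hwolfe : ⟪d + α • (vk - vprev), vk - xt⟫ ≤ ζ) :
    f xk - f xt ≤ (1 - γ) * (f xprev - f xt) + γ * ζ +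
      γ * α / 2 * (‖vprev - xt‖ ^ 2 - ‖vk - xt‖ ^ 2) + γ / 2 * (L * γ - α) * ‖vk - vprev‖ ^ 2 := by
  have hsplit : xk - zk = (1 - γ) • (xprev - zk) + γ • (xt - zk) + γ • (vk - xt) := by
    rw [hxk, hzk]; module
  have hstep : ‖xk - zk‖ = γ * ‖vk - vprev‖ := by
    rw [show xk - zk = γ • (vk - vprev) by rw [hxk, hzk]; module, norm_smul,
      Real.norm_of_nonneg hγ0]
  have hpolar : 2 * ⟪vk - vprev, vk - xt⟫ = ‖vk - vprev‖ ^ 2 + ‖vk - xt‖ ^ 2 - ‖vprev - xt‖ ^ 2 := by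
    have h := norm_sub_sq_real (vk - vprev) (vk - xt)
    rw [show vk - vprev - (vk - xt) = xt - vprev by abel, norm_sub_rev] at h
    linarith
  rw [hsplit, inner_add_right, inner_add_right, real_inner_smul_right, real_inner_smul_right,
    real_inner_smul_right, ← hsplit, hstep] at hdesc
  rw [inner_add_left, real_inner_smul_left] at hwolfe
  linear_combination hdesc + mul_le_mul_of_nonneg_left hprev (sub_nonneg.2 hγ1) +
    mul_le_mul_of_nonneg_left hxt hγ0 + mul_le_mul_of_nonneg_left hwolfe hγ0 - γ * α / 2 * hpolar

end

theorem per_iteration_descent_bound_general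
    {n m : ℕ}
    (X : Set (EuclideanSpace ℝ (Fin n))) (Y : Set (EuclideanSpace ℝ (Fin m)))
    (hXconv : Convex ℝ X)
    (f : EuclideanSpace ℝ (Fin n) → EuclideanSpace ℝ (Fin m) → ℝ)
    (gx : EuclideanSpace ℝ (Fin n) → EuclideanSpace ℝ (Fin m) → EuclideanSpace ℝ (Fin n))
    (gy : EuclideanSpace ℝ (Fin n) → EuclideanSpace ℝ (Fin m) → EuclideanSpace ℝ (Fin m))
    (hgx : ∀ x y, HasGradientAt (fun x' => f x' y) (gx x y) x)
    (L μ : ℝ) (hμ : 0 < μ) (hμL : μ ≤ L)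
    (hsmooth : ∀ x₁ ∈ X, ∀ x₂ ∈ X, ∀ y₁ ∈ Y, ∀ y₂ ∈ Y,
      ‖gx x₁ y₁ - gx x₂ y₂‖ ^ 2 + ‖gy x₁ y₁ - gy x₂ y₂‖ ^ 2 ≤
        L ^ 2 * (‖x₁ - x₂‖ ^ 2 + ‖y₁ - y₂‖ ^ 2))
    (hconv : ∀ y ∈ Y, ∀ x₁ ∈ X, ∀ x₂ ∈ X,
      f x₁ y - f x₂ y ≥ ⟪gx x₂ y, x₁ - x₂⟫)
    (γ α ζ : ℝ) (hγ0 : 0 ≤ γ) (hγ1 : γ ≤ 1)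
    (xprev vprev vk zk xk : EuclideanSpace ℝ (Fin n))
    (hxprev : xprev ∈ X) (hvprev : vprev ∈ X) (hvk : vk ∈ X)
    (hzk : zk = (1 - γ) • xprev + γ • vprev)
    (hxk : xk = (1 - γ) • xprev + γ • vk)
    (yk : EuclideanSpace ℝ (Fin m)) (hyk : yk ∈ Y)
    (hwolfe : ∀ x ∈ X, ⟪gx zk yk + α • (vk - vprev), vk - x⟫ ≤ ζ) :
    ∀ xtilde ∈ X,
      f xk yk - f xtilde yk ≤
        (1 - γ) * (f xprev yk - f xtilde yk) + γ * ζ +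
          γ * α / 2 * (‖vprev - xtilde‖ ^ 2 - ‖vk - xtilde‖ ^ 2) +
          γ / 2 * (L * γ - α) * ‖vk - vprev‖ ^ 2 := by
  intro xt hxt
  have hzX : zk ∈ X := hzk ▸ hXconv hxprev hvprev (by linarith) hγ0 (by ring)
  have hxX : xk ∈ X := hxk ▸ hXconv hxprev hvk (by linarith) hγ0 (by ring)
  have hlip : ∀ x₁ ∈ X, ∀ x₂ ∈ X, ‖gx x₁ yk - gx x₂ yk‖ ≤ L * ‖x₁ - x₂‖ := by
    intro x₁ h₁ x₂ h₂
    have h := hsmooth x₁ h₁ x₂ h₂ yk hyk yk hyk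
    rw [sub_self, norm_zero, zero_pow two_ne_zero, add_zero] at h
    have hL : 0 ≤ L := hμ.le.trans hμL
    refine (pow_le_pow_iff_left₀ (norm_nonneg _) (by positivity) two_ne_zero).1 ?_
    nlinarith [sq_nonneg ‖gy x₁ yk - gy x₂ yk‖]
  exact sub_le_of_descent_of_wolfe_gap (f := fun x => f x yk) hγ0 hγ1 hzk hxk
    (hXconv.descent_lemma (fun x _ => hgx x yk) hlip hzX hxX)
    (hconv yk hyk xprev hxprev zk hzX) (hconv yk hyk xt hxt zk hzX) (hwolfe xt hxt)

/-- With `0 ≤ γ ≤ 1`, `α ≥ Lγ`, `ζ ≥ 0`, `z_k = (1−γ)x_{k−1} + γv_{k−1}`,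
`x_k = (1−γ)x_{k−1} + γv_k`, and the Wolfe-gap condition
`⟪∇ₓf(z_k,y_k) + α(v_k − v_{k−1}), v_k − x⟫ ≤ ζ` for all `x ∈ X`, one has for every `x̃ ∈ X`:
`f(x_k,y_k) − f(x̃,y_k) ≤ (1−γ)(f(x_{k−1},y_k) − f(x̃,y_k)) + γζ
  + (γα/2)(‖v_{k−1}−x̃‖² − ‖v_k−x̃‖²) + (γ/2)(Lγ−α)‖v_k−v_{k−1}‖²`. -/
theorem per_iteration_descent_bound
    {n m : ℕ}
    (X : Set (EuclideanSpace ℝ (Fin n))) (Y : Set (EuclideanSpace ℝ (Fin m)))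
    (hXconv : Convex ℝ X) (hXcomp : IsCompact X) (hXne : X.Nonempty)
    (hYconv : Convex ℝ Y) (hYcomp : IsCompact Y) (hYne : Y.Nonempty)
    (f : EuclideanSpace ℝ (Fin n) → EuclideanSpace ℝ (Fin m) → ℝ)
    (gx : EuclideanSpace ℝ (Fin n) → EuclideanSpace ℝ (Fin m) → EuclideanSpace ℝ (Fin n))
    (gy : EuclideanSpace ℝ (Fin n) → EuclideanSpace ℝ (Fin m) → EuclideanSpace ℝ (Fin m))
    (hgx : ∀ x y, HasGradientAt (fun x' => f x' y) (gx x y) x)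
    (hgy : ∀ x y, HasGradientAt (fun y' => f x y') (gy x y) y)
    (L μ : ℝ) (hμ : 0 < μ) (hμL : μ ≤ L)
    (hsmooth : ∀ x₁ ∈ X, ∀ x₂ ∈ X, ∀ y₁ ∈ Y, ∀ y₂ ∈ Y,
      ‖gx x₁ y₁ - gx x₂ y₂‖ ^ 2 + ‖gy x₁ y₁ - gy x₂ y₂‖ ^ 2 ≤
        L ^ 2 * (‖x₁ - x₂‖ ^ 2 + ‖y₁ - y₂‖ ^ 2))
    (hconv : ∀ y ∈ Y, ∀ x₁ ∈ X, ∀ x₂ ∈ X,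
      f x₁ y - f x₂ y ≥ ⟪gx x₂ y, x₁ - x₂⟫)
    (hconc : ∀ x ∈ X, ∀ y₁ ∈ Y, ∀ y₂ ∈ Y,
      f x y₁ - f x y₂ ≤ ⟪gy x y₂, y₁ - y₂⟫ - μ / 2 * ‖y₁ - y₂‖ ^ 2)
    (γ α ζ : ℝ) (hγ0 : 0 ≤ γ) (hγ1 : γ ≤ 1) (hαγ : L * γ ≤ α) (hζ : 0 ≤ ζ)
    (xprev vprev vk zk xk : EuclideanSpace ℝ (Fin n))
    (hxprev : xprev ∈ X) (hvprev : vprev ∈ X) (hvk : vk ∈ X)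
    (hzk : zk = (1 - γ) • xprev + γ • vprev)
    (hxk : xk = (1 - γ) • xprev + γ • vk)
    (yk : EuclideanSpace ℝ (Fin m)) (hyk : yk ∈ Y)
    (hwolfe : ∀ x ∈ X, ⟪gx zk yk + α • (vk - vprev), vk - x⟫ ≤ ζ) :
    ∀ xtilde ∈ X,
      f xk yk - f xtilde yk ≤
        (1 - γ) * (f xprev yk - f xtilde yk) + γ * ζ +
          γ * α / 2 * (‖vprev - xtilde‖ ^ 2 - ‖vk - xtilde‖ ^ 2) +
          γ / 2 * (L * γ - α) * ‖vk - vprev‖ ^ 2 :=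
  per_iteration_descent_bound_general X Y hXconv f gx gy hgx L μ hμ hμL hsmooth hconv γ α ζ hγ0 hγ1
    xprev vprev vk zk xk hxprev hvprev hvk hzk hxk yk hyk hwolfe
end
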